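/- arXiv:1909.13518 — 2 statements merged into one kernel-verified Lean document; each statement's English description precedes it below -/
import Mathlib

section
/- Let γ ∈ ℝ with |γ| < 1, let n ≥ 1, let r : ℕ → ℝ be a bounded reward sequence (there exists C₁ such that |r j| ≤ C₁ for all j), and let Q : ℕ → ℝ be a bounded sequence (there exists C₂ such that |Q t| ≤ C₂ for all t) satisfying, for every t, the composition identity Q t = ( ∑_{j=0}^{n−1} γ^j · r (t+j) ) + γ^n · Q (t+n), i.e. Q equals the truncated return of horizon n plus the n-step shifted return. Then Q represents the full return: for every t, Q t = ∑'_{j≥0} γ^j · r (t+j). (Theorem 3, deterministic trajectory form.) -/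
/-- Theorem 3 (deterministic trajectory form): a bounded `Q` satisfying the
composition identity (truncated return plus `n`-step shifted return) equals
the full return. -/
theorem composite_q_represents_full_return
    (γ : ℝ) (hγ : |γ| < 1) (n : ℕ) (hn : 1 ≤ n)
    (r : ℕ → ℝ) (C₁ : ℝ) (hr : ∀ j, |r j| ≤ C₁)
    (Q : ℕ → ℝ) (C₂ : ℝ) (hQbdd : ∀ t, |Q t| ≤ C₂)
    (hcomp : ∀ t, Q t = (∑ j ∈ Finset.range n, γ ^ j * r (t + j)) + γ ^ n * Q (t + n)) :
    ∀ t, Q t = ∑' j : ℕ, γ ^ j * r (t + j) := by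
  have hC₁ : 0 ≤ C₁ := le_trans (abs_nonneg _) (hr 0)
  have hgeo : Summable (fun j : ℕ => |γ| ^ j * C₁) :=
    (summable_geometric_of_lt_one (abs_nonneg γ) hγ).mul_right C₁
  have hnormle : ∀ t j, ‖γ ^ j * r (t + j)‖ ≤ |γ| ^ j * C₁ := by
    intro t j
    calc ‖γ ^ j * r (t + j)‖ = |γ| ^ j * |r (t + j)| := by
          rw [Real.norm_eq_abs, abs_mul, abs_pow]
      _ ≤ |γ| ^ j * C₁ :=
          mul_le_mul_of_nonneg_left (hr _) (pow_nonneg (abs_nonneg γ) j)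
  have hnsum : ∀ t, Summable (fun j : ℕ => ‖γ ^ j * r (t + j)‖) := fun t =>
    Summable.of_nonneg_of_le (fun j => norm_nonneg _) (hnormle t) hgeo
  have hsum : ∀ t, Summable (fun j : ℕ => γ ^ j * r (t + j)) := fun t =>
    (hnsum t).of_norm
  set G : ℕ → ℝ := fun t => ∑' j : ℕ, γ ^ j * r (t + j) with hGdef
  have hGbdd : ∀ t, |G t| ≤ C₁ / (1 - |γ|) := by
    intro t
    have h1 : ‖G t‖ ≤ ∑' j : ℕ, ‖γ ^ j * r (t + j)‖ := norm_tsum_le_tsum_norm (hnsum t)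
    have h2 : (∑' j : ℕ, ‖γ ^ j * r (t + j)‖) ≤ ∑' j : ℕ, |γ| ^ j * C₁ :=
      Summable.tsum_le_tsum (hnormle t) (hnsum t) hgeo
    rw [Real.norm_eq_abs] at h1
    refine (h1.trans h2).trans_eq ?_
    rw [tsum_mul_right, tsum_geometric_of_lt_one (abs_nonneg γ) hγ,
      div_eq_mul_inv, mul_comm]
  -- G satisfies the same recurrence
  have hGcomp : ∀ t, G t = (∑ j ∈ Finset.range n, γ ^ j * r (t + j)) + γ ^ n * G (t + n) := by
    intro t
    have hsplit := Summable.sum_add_tsum_nat_add (f := fun j : ℕ => γ ^ j * r (t + j)) n (hsum t)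
    rw [hGdef]
    simp only
    rw [← hsplit]
    congr 1
    rw [← tsum_mul_left]
    congr 1
    funext j
    show γ ^ (j + n) * r (t + (j + n)) = γ ^ n * (γ ^ j * r (t + n + j))
    rw [add_comm j n, pow_add, mul_assoc, ← add_assoc]
  -- difference D t = γ^n * D (t+n), iterate
  have hiter : ∀ t k, Q t - G t = (γ ^ n) ^ k * (Q (t + n * k) - G (t + n * k)) := by
    intro t k
    induction k with
    | zero => simp
    | succ k ih =>
      rw [ih]
      have := hcomp (t + n * k)
      have hG := hGcomp (t + n * k)
      have : Q (t + n * k) - G (t + n * k) = γ ^ n * (Q (t + n * k + n) - G (t + n * k + n)) := by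
        rw [hcomp (t + n * k), hGcomp (t + n * k)]; ring
      have harg : t + n * (k + 1) = t + n * k + n := by ring
      rw [this, pow_succ, harg]
      ring
  intro t
  have hM : ∀ k, |Q t - G t| ≤ (|γ| ^ n) ^ k * (C₂ + C₁ / (1 - |γ|)) := by
    intro k
    rw [hiter t k, abs_mul, abs_pow, abs_pow]
    apply mul_le_mul_of_nonneg_left _ (pow_nonneg (pow_nonneg (abs_nonneg γ) n) k)
    exact (abs_sub _ _).trans (add_le_add (hQbdd _) (hGbdd _))
  have hlim : Filter.Tendsto (fun k : ℕ => (|γ| ^ n) ^ k * (C₂ + C₁ / (1 - |γ|)))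
      Filter.atTop (nhds 0) := by
    have hlt : |γ| ^ n < 1 := pow_lt_one₀ (abs_nonneg γ) hγ (by omega)
    have h0 : (0:ℝ) ≤ |γ| ^ n := pow_nonneg (abs_nonneg γ) n
    simpa using (tendsto_pow_atTop_nhds_zero_of_lt_one h0 hlt).mul_const (C₂ + C₁ / (1 - |γ|))
  have hle : |Q t - G t| ≤ 0 := ge_of_tendsto' hlim hM
  have : Q t - G t = 0 := abs_eq_zero.mp (le_antisymm hle (abs_nonneg _))
  have := sub_eq_zero.mp this
  exact this
end

section
/- Let r : ℕ → ℝ be bounded (there exists C such that |r j| ≤ C for all j), and let γ : ℕ → ℝ be a sequence of discount values with |γ i| < 1 for all i. For each i, define the discounted value Q_i t = ∑'_{j≥0} (γ i)^j · r (t+j), and define the delta functions W 0 = Q_0 and W i = Q_i − Q_{i−1} for i ≥ 1. Then for every t: (a) W 0 t = r t + (γ 0) · W 0 (t+1), and (b) for every i ≥ 1, W i t = (γ i − γ (i−1)) · Q_{i−1} (t+1) + (γ i) · W i (t+1). (The TD(Δ) Bellman identities underlying the off-policy TD3(Δ) targets.) -/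
lemma td_summable (r : ℕ → ℝ) (C : ℝ) (hr : ∀ j, |r j| ≤ C)
    (g : ℝ) (hg : |g| < 1) (t : ℕ) :
    Summable fun j : ℕ => g ^ j * r (t + j) := by
  apply Summable.of_norm
  have : Summable fun j : ℕ => C * |g| ^ j :=
    (summable_geometric_of_lt_one (abs_nonneg g) hg).mul_left C
  apply this.of_nonneg_of_le (fun j => norm_nonneg _)
  intro j
  rw [Real.norm_eq_abs, abs_mul, abs_pow]
  calc |g| ^ j * |r (t + j)| ≤ |g| ^ j * C := by
        exact mul_le_mul_of_nonneg_left (hr _) (pow_nonneg (abs_nonneg g) j)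
    _ = C * |g| ^ j := mul_comm _ _

lemma td_bellman (r : ℕ → ℝ) (C : ℝ) (hr : ∀ j, |r j| ≤ C)
    (g : ℝ) (hg : |g| < 1) (t : ℕ) :
    (∑' j : ℕ, g ^ j * r (t + j)) = r t + g * ∑' j : ℕ, g ^ j * r (t + 1 + j) := by
  rw [Summable.tsum_eq_zero_add (td_summable r C hr g hg t)]
  simp only [pow_zero, one_mul, Nat.add_zero, pow_succ]
  rw [← tsum_mul_left]
  congr 1
  apply tsum_congr
  intro j
  ring_nf

/-- The TD(Δ) Bellman identities underlying the off-policy TD3(Δ) targets: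
(a) the base delta function satisfies the usual Bellman recursion, and
(b) each higher delta function satisfies its own Bellman-style recursion. -/
theorem td_delta_bellman_identities
    (r : ℕ → ℝ) (C : ℝ) (hr : ∀ j, |r j| ≤ C)
    (γ : ℕ → ℝ) (hγ : ∀ i, |γ i| < 1)
    (Q : ℕ → ℕ → ℝ) (hQ : ∀ i t, Q i t = ∑' j : ℕ, (γ i) ^ j * r (t + j))
    (W : ℕ → ℕ → ℝ)
    (hW0 : ∀ t, W 0 t = Q 0 t)
    (hWi : ∀ i, 1 ≤ i → ∀ t, W i t = Q i t - Q (i - 1) t) :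
    (∀ t, W 0 t = r t + γ 0 * W 0 (t + 1)) ∧
    (∀ i, 1 ≤ i → ∀ t,
      W i t = (γ i - γ (i - 1)) * Q (i - 1) (t + 1) + γ i * W i (t + 1)) := by
  have hQb : ∀ i t, Q i t = r t + γ i * Q i (t + 1) := by
    intro i t
    rw [hQ i t, hQ i (t + 1)]
    exact td_bellman r C hr (γ i) (hγ i) t
  constructor
  · intro t
    rw [hW0 t, hW0 (t + 1), hQb 0 t]
  · intro i hi t
    rw [hWi i hi t, hWi i hi (t + 1), hQb i t, hQb (i - 1) t]
    ring
end
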